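/- Let q be a prime power, let real numbers R1, R2 satisfy 0 ≤ R2 < R1 ≤ 1 and R1 − R2 ≤ 1, and set τ = R1 − R2. Then the asymptotic metric δ_q(τ, R1, R2) = limsup_{n→∞} max{ d/n : there exist an integer t and nested linear codes C2 ⊆ C1 ⊆ F_q^n with 1 ≤ t ≤ nτ, t ≤ dim C1 − dim C2, dim C1 ≥ nR1, dim C2 ≤ nR2, and M_t(C1, C2) ≥ d } satisfies δ_q(τ, R1, R2) = 1 + τ − R1. -/

import Mathlib

/-- `V_I = {x ∈ F^n : i ∉ I → x i = 0}` -/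
noncomputable def VI (F : Type) [Field F] (n : ℕ) (I : Finset (Fin n)) :
    Submodule F (Fin n → F) :=
  Submodule.pi (↑I)ᶜ (fun _ => (⊥ : Submodule F F))

/-- the `t`-th relative generalized Hamming weight of `C₂ ⊆ C₁ ⊆ F^n` -/
noncomputable def RGHW (F : Type) [Field F] {n : ℕ} (t : ℕ)
    (C₁ C₂ : Submodule F (Fin n → F)) : ℕ :=
  sInf {d : ℕ | ∃ I : Finset (Fin n), I.card = d ∧
    Module.finrank F ↥(C₁ ⊓ VI F n I) ≥ Module.finrank F ↥(C₂ ⊓ VI F n I) + t}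

/-- `π(q) = ∏_{i=1}^∞ (1 - q^{-i})` -/
noncomputable def piq (q : ℝ) : ℝ := ∏' i : ℕ, (1 - (q ^ (i + 1))⁻¹)

/-- `N₁(w,u) = ∏_{i=0}^{u-1}(q^w - q^i) / ∏_{i=0}^{u-1}(q^u - q^i)` -/
noncomputable def N1 (q : ℝ) (w u : ℕ) : ℝ :=
  (∏ i ∈ Finset.range u, (q ^ w - q ^ i)) / (∏ i ∈ Finset.range u, (q ^ u - q ^ i))

/-- `N₂(w,u,v) = ∏_{i=0}^{v-1}(q^w - q^{u+i}) / ∏_{i=0}^{v-1}(q^v - q^i)` -/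
noncomputable def N2 (q : ℝ) (w u v : ℕ) : ℝ :=
  (∏ i ∈ Finset.range v, (q ^ w - q ^ (u + i))) / (∏ i ∈ Finset.range v, (q ^ v - q ^ i))

/-- `N₃(w,u,v,a) = N₁(u,a) · N₂(w-a, u-a, v-a)` -/
noncomputable def N3 (q : ℝ) (w u v a : ℕ) : ℝ :=
  N1 q u a * N2 q (w - a) (u - a) (v - a)

/-! The relative Singleton bound `M_t(C₁, C₂) ≤ n - dim C₁ + t`, obtained by choosing `I` disjoint
from an information set of `C₂`, gives `δ ≤ 1 + τ - R₁`.

Conversely, pull codes back along the map `Fin n → Fin (a + m)` that fixes the first `a`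
coordinates and folds the other `n - a` cyclically onto `m` symbols: `C₂` is spanned by the first
`a` unit vectors and `C₁` additionally by `m` blocks of at most `⌊(n - a)/m⌋ + 1` coordinates.
A set `I` gains `t` dimensions of `C₁` over `C₂` only if it contains `t` whole blocks, so
`M_t(C₁, C₂) ≥ n - a - (m - t)(⌊(n - a)/m⌋ + 1)`. With `a = ⌊nR₂⌋`, `a + m = ⌈nR₁⌉` and
`t = ⌊nτ⌋` we have `m - t ≤ 2` and `(n - a)/m ≤ 1/τ`, so the ratio is `1 - R₂ - O(1/n)`, and
`1 - R₂ = 1 + τ - R₁`. -/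

open Module Finset

section Codes

variable {F : Type} [Field F] {n : ℕ}

lemma mem_VI {I : Finset (Fin n)} {x : Fin n → F} : x ∈ VI F n I ↔ ∀ i ∉ I, x i = 0 := by
  simp [VI, Submodule.mem_pi]

lemma VI_eq_iInf_ker_proj (I : Finset (Fin n)) :
    VI F n I = ⨅ i ∈ (↑I : Set (Fin n))ᶜ, LinearMap.ker (LinearMap.proj i) := by
  ext x; simp [mem_VI, Submodule.mem_iInf]

lemma finrank_VI (I : Finset (Fin n)) : finrank F (VI F n I) = #I := by
  classical
  rw [VI_eq_iInf_ker_proj, (LinearMap.iInfKerProjEquiv F (fun _ => F) disjoint_compl_right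
    (by simp)).finrank_eq]
  simp

lemma VI_mono {I J : Finset (Fin n)} (h : I ⊆ J) : VI F n I ≤ VI F n J := fun _ hx =>
  mem_VI.2 fun i hi => mem_VI.1 hx i fun hI => hi (h hI)

lemma VI_univ : VI F n univ = ⊤ := by
  ext x; simp [mem_VI]

lemma finrank_add_card_le_finrank_inf_VI (C : Submodule F (Fin n → F)) (I : Finset (Fin n)) :
    finrank F C + #I ≤ finrank F ↥(C ⊓ VI F n I) + n := by
  have := Submodule.finrank_sup_add_finrank_inf_eq C (VI F n I)
  have := (C ⊔ VI F n I).finrank_le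
  rw [finrank_VI] at *
  simp only [finrank_fin_fun] at *
  omega

lemma exists_inf_VI_compl_eq_bot (C : Submodule F (Fin n → F)) :
    ∃ J : Finset (Fin n), #J ≤ finrank F C ∧ C ⊓ VI F n Jᶜ = ⊥ := by
  induction h : finrank F C using Nat.strong_induction_on generalizing C with
  | _ k ih =>
  by_cases hC : C = ⊥
  · exact ⟨∅, by simp, by simp [hC]⟩
  obtain ⟨x, hxC, hx⟩ := Submodule.exists_mem_ne_zero_of_ne_bot hC
  obtain ⟨i, hi⟩ := Function.ne_iff.1 hx
  set C' := C ⊓ VI F n {i}ᶜ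
  have hlt : finrank F C' < k := h ▸ Submodule.finrank_lt_finrank_of_lt
    (lt_of_le_of_ne inf_le_left fun hC => hi (mem_VI.1 (hC ▸ hxC : x ∈ C').2 i (by simp)))
  obtain ⟨J, hJ, hCJ⟩ := ih _ hlt C' rfl
  refine ⟨insert i J, (card_insert_le _ _).trans (by omega), eq_bot_iff.2 ?_⟩
  calc C ⊓ VI F n (insert i J)ᶜ ≤ C' ⊓ VI F n Jᶜ :=
        le_inf (inf_le_inf_left _ (VI_mono (by simp)))
          (inf_le_right.trans (VI_mono (compl_subset_compl.2 (subset_insert _ _))))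
    _ = ⊥ := hCJ

lemma RGHW_le (t : ℕ) {C₁ C₂ : Submodule F (Fin n → F)} (h : C₂ ≤ C₁)
    (ht : t ≤ finrank F C₁ - finrank F C₂) :
    RGHW F t C₁ C₂ ≤ n - finrank F C₁ + t := by
  have hC₂ := Submodule.finrank_mono h
  have hC₁ : finrank F C₁ ≤ n := by simpa using C₁.finrank_le
  obtain ⟨J, hJ, hC₂J⟩ := exists_inf_VI_compl_eq_bot C₂
  obtain ⟨I, hIJ, hI⟩ := exists_subset_card_eq (s := Jᶜ) (n := n - finrank F C₁ + t)
    (by rw [card_compl, Fintype.card_fin]; omega)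
  refine Nat.sInf_le ⟨I, hI, ?_⟩
  have hC₂I : C₂ ⊓ VI F n I = ⊥ := eq_bot_iff.2 (hC₂J ▸ inf_le_inf_left _ (VI_mono hIJ))
  have := finrank_add_card_le_finrank_inf_VI C₁ I
  rw [hC₂I, finrank_bot]
  omega

section Pullback

variable {k : ℕ} (P : Fin n → Fin k)

lemma map_funLeft_VI_inf_VI (S : Finset (Fin k)) (I : Finset (Fin n)) :
    (VI F k S).map (LinearMap.funLeft F F P) ⊓ VI F n I =
      (VI F k {s ∈ S | ∀ i, P i = s → i ∈ I}).map (LinearMap.funLeft F F P) := by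
  apply le_antisymm
  · rintro _ ⟨⟨y, hy, rfl⟩, hyI⟩
    rw [SetLike.mem_coe, mem_VI] at hy hyI
    refine ⟨fun s => if ∀ i, P i = s → i ∈ I then y s else 0, mem_VI.2 fun s hs => ?_, ?_⟩
    · split_ifs with hsI
      exacts [hy s fun hS => hs (mem_filter.2 ⟨hS, hsI⟩), rfl]
    · funext i
      simp only [LinearMap.funLeft_apply]
      split_ifs with hiI
      · rfl
      · push Not at hiI
        obtain ⟨j, hj, hjI⟩ := hiI
        rw [← hj]
        exact (hyI j hjI).symm
  · rintro _ ⟨y, hy, rfl⟩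
    refine ⟨⟨y, VI_mono (filter_subset _ _) hy, rfl⟩, mem_VI.2 fun i hi => ?_⟩
    exact mem_VI.1 hy (P i) fun hPi => hi ((mem_filter.1 hPi).2 i rfl)

variable {P}

lemma finrank_map_funLeft_VI (hP : Function.Surjective P) (S : Finset (Fin k)) :
    finrank F ((VI F k S).map (LinearMap.funLeft F F P)) = #S := by
  rw [← (Submodule.equivMapOfInjective _ (LinearMap.funLeft_injective_of_surjective _ _ P hP)
    (VI F k S)).finrank_eq, finrank_VI]

lemma le_RGHW_range_funLeft (hP : Function.Surjective P) {S : Finset (Fin k)} {t d : ℕ}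
    (ht : #S + t ≤ k) (hd : ∀ T : Finset (Fin k), Disjoint S T → t ≤ #T → d ≤ #{i | P i ∈ T}) :
    d ≤ RGHW F t (LinearMap.range (LinearMap.funLeft F F P))
      ((VI F k S).map (LinearMap.funLeft F F P)) := by
  rw [LinearMap.range_eq_map, ← VI_univ]
  refine le_csInf ⟨n, univ, by simp, ?_⟩ ?_
  · rw [map_funLeft_VI_inf_VI, map_funLeft_VI_inf_VI, finrank_map_funLeft_VI hP,
      finrank_map_funLeft_VI hP]
    simpa using ht
  rintro _ ⟨I, rfl, hI⟩
  rw [map_funLeft_VI_inf_VI, map_funLeft_VI_inf_VI, finrank_map_funLeft_VI hP,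
    finrank_map_funLeft_VI hP] at hI
  set full : Finset (Fin k) := {s | ∀ i, P i = s → i ∈ I}
  have hsplit := card_sdiff_add_card_inter full S
  rw [show full ∩ S = {s ∈ S | ∀ i, P i = s → i ∈ I} by ext; simp [full, and_comm]] at hsplit
  calc d ≤ #{i | P i ∈ full \ S} := hd _ disjoint_sdiff (by omega)
    _ ≤ #I := card_le_card fun i hi => (mem_filter.1 (mem_sdiff.1 (mem_filter.1 hi).2).1).2 i rfl

end Pullback

lemma card_filter_mem_le_add_mul {α β : Type*} [Fintype α] [DecidableEq α] [DecidableEq β]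
    (P : α → β) (T U : Finset β) {B : ℕ} (hB : ∀ b, #{a | P a = b} ≤ B) :
    #{a | P a ∈ U} ≤ #{a | P a ∈ T} + B * #(U \ T) := by
  calc #{a | P a ∈ U} ≤ #(({a | P a ∈ T} : Finset α) ∪ ({a | P a ∈ U \ T} : Finset α)) :=
        card_le_card fun a ha => by by_cases h : P a ∈ T <;> simp_all
    _ ≤ #{a | P a ∈ T} + #{a | P a ∈ U \ T} := card_union_le _ _
    _ ≤ #{a | P a ∈ T} + B * #(U \ T) := by
        gcongr
        refine card_le_mul_card_image_of_maps_to (fun a ha => (mem_filter.1 ha).2) B fun b _ => ?_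
        exact (card_le_card fun x hx => by simp_all).trans (hB b)

lemma card_filter_le_val (a : ℕ) : #{i : Fin n | a ≤ i} = n - a := by
  have := card_filter_add_card_filter_not (s := (univ : Finset (Fin n))) (· < a)
  simp only [Fin.card_filter_val_lt, not_lt, card_univ, Fintype.card_fin] at this
  omega

def foldCoord (a m : ℕ) [NeZero m] (i : Fin n) : Fin (a + m) :=
  if h : (i : ℕ) < a then Fin.castAdd m ⟨i, h⟩
  else Fin.natAdd a ⟨(i - a) % m, Nat.mod_lt _ (NeZero.pos m)⟩

section FoldCoord

variable {a m : ℕ} [NeZero m]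

lemma val_foldCoord (i : Fin n) :
    (foldCoord a m i : ℕ) = if (i : ℕ) < a then (i : ℕ) else a + (i - a) % m := by
  unfold foldCoord; split_ifs <;> rfl

lemma foldCoord_surjective (h : a + m ≤ n) :
    Function.Surjective (foldCoord a m : Fin n → Fin (a + m)) := by
  intro s
  refine ⟨⟨s, by omega⟩, Fin.ext ?_⟩
  rw [val_foldCoord]
  dsimp only
  split_ifs with hs
  · rfl
  · rw [Nat.mod_eq_of_lt (by omega)]
    omega

lemma le_val_foldCoord_iff (i : Fin n) : a ≤ (foldCoord a m i : ℕ) ↔ a ≤ i := by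
  rw [val_foldCoord]; split_ifs <;> omega

lemma card_fiber_foldCoord_le (s : Fin (a + m)) :
    #{i : Fin n | foldCoord a m i = s} ≤ (n - a) / m + 1 := by
  calc #{i : Fin n | foldCoord a m i = s} ≤ #(range ((n - a) / m + 1)) := by
        refine card_le_card_of_injOn (fun i => (i - a) / m) (fun i _ => ?_) fun i hi j hj hij => ?_
        · simp only [coe_range, Set.mem_Iio]
          exact Nat.lt_succ_of_le (Nat.div_le_div_right (by omega))
        · simp only [coe_filter, mem_univ, true_and, Set.mem_ofPred_eq] at hi hj
          have hval := congrArg Fin.val (hi.trans hj.symm)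
          rw [val_foldCoord, val_foldCoord] at hval
          dsimp only at hij
          have hi' := Nat.div_add_mod ((i : ℕ) - a) m
          have hj' := Nat.div_add_mod ((j : ℕ) - a) m
          rw [hij] at hi'
          ext
          split_ifs at hval <;> omega
    _ = (n - a) / m + 1 := card_range _

end FoldCoord

lemma exists_le_RGHW (a m t : ℕ) [NeZero m] (hn : a + m ≤ n) (ht : t ≤ m) :
    ∃ C₁ C₂ : Submodule F (Fin n → F), C₂ ≤ C₁ ∧ finrank F C₁ = a + m ∧ finrank F C₂ = a ∧
      n - a ≤ RGHW F t C₁ C₂ + ((n - a) / m + 1) * (m - t) := by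
  set P := (foldCoord a m : Fin n → Fin (a + m))
  have hP : Function.Surjective P := foldCoord_surjective hn
  set S : Finset (Fin (a + m)) := {s | (s : ℕ) < a}
  have hS : #S = a := by simp [S, Fin.card_filter_val_lt]
  refine ⟨LinearMap.range (LinearMap.funLeft F F P), (VI F _ S).map (LinearMap.funLeft F F P),
    LinearMap.map_le_range, ?_, by rw [finrank_map_funLeft_VI hP, hS], ?_⟩
  · rw [LinearMap.range_eq_map, ← VI_univ, finrank_map_funLeft_VI hP, card_univ, Fintype.card_fin]
  suffices n - a - ((n - a) / m + 1) * (m - t) ≤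
      RGHW F t (LinearMap.range (LinearMap.funLeft F F P))
        ((VI F _ S).map (LinearMap.funLeft F F P)) by omega
  refine le_RGHW_range_funLeft hP (by omega) fun T hST hT => ?_
  have hsplit := card_filter_mem_le_add_mul P T Sᶜ card_fiber_foldCoord_le
  have hpre : #{i | P i ∈ Sᶜ} = n - a := by
    simpa [S, P, le_val_foldCoord_iff] using card_filter_le_val (n := n) a
  have hrest : #(Sᶜ \ T) ≤ m - t := by
    rw [card_sdiff_of_subset (subset_compl_iff_disjoint_left.2 hST), card_compl, hS]
    simp only [Fintype.card_fin]
    omega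
  have := Nat.mul_le_mul_left ((n - a) / m + 1) hrest
  omega

def achievableRatios (F : Type) [Field F] (n : ℕ) (τ R1 R2 : ℝ) : Set ℝ :=
  {r : ℝ | ∃ (t d : ℕ) (C₁ C₂ : Submodule F (Fin n → F)), C₂ ≤ C₁ ∧
    1 ≤ t ∧ (t : ℝ) ≤ (n : ℝ) * τ ∧
    t ≤ Module.finrank F C₁ - Module.finrank F C₂ ∧
    (Module.finrank F C₁ : ℝ) ≥ (n : ℝ) * R1 ∧
    (Module.finrank F C₂ : ℝ) ≤ (n : ℝ) * R2 ∧
    RGHW F t C₁ C₂ ≥ d ∧ r = (d : ℝ) / n}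

lemma le_of_mem_achievableRatios {τ R1 R2 r : ℝ} (hr : r ∈ achievableRatios F n τ R1 R2) :
    r ≤ 1 + τ - R1 := by
  obtain ⟨t, d, C₁, C₂, h, ht, htτ, htk, hk₁, -, hd, rfl⟩ := hr
  have hn : n ≠ 0 := by rintro rfl; simp at htτ; omega
  have hC₁ : finrank F C₁ ≤ n := by simpa using C₁.finrank_le
  have hdt : (d : ℝ) ≤ n - finrank F C₁ + t := by
    rw [← Nat.cast_sub hC₁]; exact_mod_cast hd.trans (RGHW_le t h htk)
  rw [div_le_iff₀ (by positivity)]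
  nlinarith

lemma sub_div_le_div_of_le_add {n a m d : ℕ} {τ ρ : ℝ} (hτ : 0 < τ) (hn : 0 < n) (ha : a ≤ n)
    (haρ : a ≤ n * ρ) (hm : n * τ ≤ m) (hd : n - a ≤ d + ((n - a) / m + 1) * 2) :
    1 - ρ - 2 * (1 / τ + 1) / n ≤ d / n := by
  have hq : ((n - a) / m : ℕ) * τ ≤ 1 := by
    have : (((n - a) / m : ℕ) : ℝ) * m ≤ n := by
      exact_mod_cast (Nat.div_mul_le_self _ _).trans (Nat.sub_le _ _)
    have : (0 : ℝ) < n := by exact_mod_cast hn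
    nlinarith
  have hq' : (((n - a) / m : ℕ) : ℝ) ≤ 1 / τ := by rw [le_div_iff₀ hτ]; exact hq
  have hd' : (n : ℝ) - a ≤ d + ((((n - a) / m : ℕ) : ℝ) + 1) * 2 := by
    rw [← Nat.cast_sub ha]; exact_mod_cast hd
  calc 1 - ρ - 2 * (1 / τ + 1) / n = ((1 - ρ) * n - 2 * (1 / τ + 1)) / n := by
        field_simp
    _ ≤ d / n := by gcongr; nlinarith

lemma exists_mem_achievableRatios_ge {τ R1 R2 : ℝ} (hR20 : 0 ≤ R2) (hR11 : R1 ≤ 1)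
    (hτ : τ = R1 - R2) (hn : 1 ≤ (n : ℝ) * τ) :
    ∃ r ∈ achievableRatios F n τ R1 R2, 1 + τ - R1 - 2 * (1 / τ + 1) / n ≤ r := by
  have hτ0 : 0 < τ := by
    by_contra! h; nlinarith [(n.cast_nonneg : (0 : ℝ) ≤ n)]
  have hn0 : (0 : ℝ) < n := by
    by_contra! h; nlinarith
  have hnτ : n * τ = n * R1 - n * R2 := by rw [hτ]; ring
  set k₂ := ⌊n * R2⌋₊
  set k₁ := ⌈n * R1⌉₊
  set t := ⌊n * τ⌋₊
  have hk₂ : (k₂ : ℝ) ≤ n * R2 := Nat.floor_le (by positivity)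
  have hk₂' : n * R2 < k₂ + 1 := Nat.lt_floor_add_one _
  have hk₁ : n * R1 ≤ k₁ := Nat.le_ceil _
  have hk₁' : (k₁ : ℝ) < n * R1 + 1 := Nat.ceil_lt_add_one (by nlinarith)
  have ht : (t : ℝ) ≤ n * τ := Nat.floor_le (by positivity)
  have ht' : n * τ < t + 1 := Nat.lt_floor_add_one _
  have ht1 : 1 ≤ t := Nat.le_floor (by exact_mod_cast hn)
  have hk₁n : k₁ ≤ n := Nat.ceil_le.2 (by nlinarith)
  have hk₂t : k₂ + t ≤ k₁ := by exact_mod_cast (show (k₂ + t : ℝ) ≤ k₁ by linarith)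
  have hk₁t : k₁ < k₂ + t + 3 := by exact_mod_cast (show (k₁ : ℝ) < k₂ + t + 3 by linarith)
  set m := k₁ - k₂
  have : NeZero m := ⟨by omega⟩
  obtain ⟨C₁, C₂, h, hC₁, hC₂, hd⟩ := exists_le_RGHW (F := F) (n := n) k₂ m t (by omega) (by omega)
  refine ⟨RGHW F t C₁ C₂ / n, ⟨t, _, C₁, C₂, h, ht1, ht, by rw [hC₁, hC₂]; omega, ?_,
    by rw [hC₂]; exact hk₂, le_rfl, rfl⟩, ?_⟩
  · rw [hC₁, show k₂ + m = k₁ by omega]; exact hk₁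
  have hm : n * τ ≤ m := by rw [Nat.cast_sub (by omega)]; linarith
  rw [show 1 + τ - R1 = 1 - R2 by rw [hτ]; ring]
  exact sub_div_le_div_of_le_add hτ0 (by exact_mod_cast hn0) (by omega) hk₂ hm
    (hd.trans (by gcongr; omega))

end Codes

theorem delta_eq_tau_eq_diff_general (F : Type) [Field F]
    (τ R1 R2 : ℝ) (hR20 : 0 ≤ R2) (hR21 : R2 < R1) (hR11 : R1 ≤ 1)
    (hτ : τ = R1 - R2) :
    Filter.limsup (fun n : ℕ =>
        sSup {r : ℝ | ∃ (t d : ℕ) (C₁ C₂ : Submodule F (Fin n → F)), C₂ ≤ C₁ ∧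
          1 ≤ t ∧ (t : ℝ) ≤ (n : ℝ) * τ ∧
          t ≤ Module.finrank F C₁ - Module.finrank F C₂ ∧
          (Module.finrank F C₁ : ℝ) ≥ (n : ℝ) * R1 ∧
          (Module.finrank F C₂ : ℝ) ≤ (n : ℝ) * R2 ∧
          RGHW F t C₁ C₂ ≥ d ∧ r = (d : ℝ) / n})
      Filter.atTop = 1 + τ - R1 := by
  have hτ0 : 0 < τ := by linarith
  change Filter.limsup (fun n : ℕ => sSup (achievableRatios F n τ R1 R2)) Filter.atTop = _
  have hbdd (n : ℕ) : BddAbove (achievableRatios F n τ R1 R2) :=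
    ⟨_, fun _ => le_of_mem_achievableRatios⟩
  refine Filter.Tendsto.limsup_eq (tendsto_of_tendsto_of_tendsto_of_le_of_le'
    (g := fun n : ℕ => 1 + τ - R1 - 2 * (1 / τ + 1) / n) ?_ tendsto_const_nhds ?_ ?_)
  · simpa using tendsto_const_nhds.sub (tendsto_const_div_atTop_nhds_zero_nat (2 * (1 / τ + 1)))
  · filter_upwards [(tendsto_natCast_atTop_atTop.atTop_mul_const hτ0).eventually_ge_atTop 1]
      with n hn
    obtain ⟨r, hr, hle⟩ := exists_mem_achievableRatios_ge (F := F) hR20 hR11 hτ hn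
    exact hle.trans (le_csSup (hbdd n) hr)
  · exact Filter.Eventually.of_forall fun n =>
      Real.sSup_le (fun _ => le_of_mem_achievableRatios) (by linarith)

/-- Corollary 1 (case `τ = R₁ - R₂`): `δ_q(τ, R₁, R₂) = 1 + τ - R₁`. -/
theorem delta_eq_tau_eq_diff (F : Type) [Field F] [Fintype F]
    (τ R1 R2 : ℝ) (hR20 : 0 ≤ R2) (hR21 : R2 < R1) (hR11 : R1 ≤ 1)
    (hdiff : R1 - R2 ≤ 1) (hτ : τ = R1 - R2) :
    Filter.limsup (fun n : ℕ =>
        sSup {r : ℝ | ∃ (t d : ℕ) (C₁ C₂ : Submodule F (Fin n → F)), C₂ ≤ C₁ ∧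
          1 ≤ t ∧ (t : ℝ) ≤ (n : ℝ) * τ ∧
          t ≤ Module.finrank F C₁ - Module.finrank F C₂ ∧
          (Module.finrank F C₁ : ℝ) ≥ (n : ℝ) * R1 ∧
          (Module.finrank F C₂ : ℝ) ≤ (n : ℝ) * R2 ∧
          RGHW F t C₁ C₂ ≥ d ∧ r = (d : ℝ) / n})
      Filter.atTop = 1 + τ - R1 :=
  delta_eq_tau_eq_diff_general F τ R1 R2 hR20 hR21 hR11 hτ
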